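/- arXiv:1904.02880 — 3 statements merged into one kernel-verified Lean document; each statement's English description precedes it below -/
import Mathlib

section
/- If Σ₁ and Σ₂ are positive semidefinite d×d real matrices that commute (Σ₁Σ₂ = Σ₂Σ₁), then tr(Σ₁ + Σ₂ − 2(Σ₁^{1/2} Σ₂ Σ₁^{1/2})^{1/2}) = ‖Σ₁^{1/2} − Σ₂^{1/2}‖_F², where ‖A‖_F = (tr(AᵀA))^{1/2} is the Frobenius norm. -/
/-!
Square roots of commuting positive elements commute, so `√Σ₁ √Σ₂` is positive with square
`√Σ₁ Σ₂ √Σ₁`; by uniqueness of positive square roots it is `(√Σ₁ Σ₂ √Σ₁)^{1/2}`, and the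
identity becomes the expansion of `(√Σ₁ - √Σ₂)²`. Uniqueness is available for `CFC.sqrt`, with
which the eigendecomposition square root `PosSemidef.sqrt` agrees.
-/

namespace Matrix.PosSemidef

/-- The positive semidefinite square root of a positive semidefinite matrix
(the definition Mathlib had in December 2024, since removed). -/
noncomputable def sqrt {n 𝕜 : Type*} [Fintype n] [RCLike 𝕜] [PartialOrder 𝕜] [DecidableEq n]
    {A : Matrix n n 𝕜} (hA : A.PosSemidef) : Matrix n n 𝕜 :=
  hA.1.eigenvectorUnitary.1 * Matrix.diagonal ((↑) ∘ (√·) ∘ hA.1.eigenvalues) *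
  (star hA.1.eigenvectorUnitary : Matrix n n 𝕜)

end Matrix.PosSemidef

section CommuteSqrt

open CFC

variable {A : Type*} [PartialOrder A] [Ring A] [StarRing A] [TopologicalSpace A] [Algebra ℝ A]
  [StarOrderedRing A] [ContinuousFunctionalCalculus ℝ A IsSelfAdjoint] [NonnegSpectrumClass ℝ A]
  [IsTopologicalRing A] [T2Space A]

theorem Commute.cfcSqrt_left {a b : A} (h : Commute a b) : Commute (sqrt a) b :=
  sqrt_eq_cfc (a := a) ▸ h.cfc_nnreal _

theorem Commute.cfcSqrt {a b : A} (h : Commute a b) : Commute (sqrt a) (sqrt b) :=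
  h.cfcSqrt_left.symm.cfcSqrt_left.symm

theorem Commute.sqrt_sqrt_mul_mul_sqrt {a b : A} (ha : 0 ≤ a) (hb : 0 ≤ b)
    (h : Commute a b) : sqrt (sqrt a * b * sqrt a) = sqrt a * sqrt b := by
  refine sqrt_unique ?_ (h.cfcSqrt.mul_nonneg (sqrt_nonneg a) (sqrt_nonneg b))
  rw [h.cfcSqrt.symm.mul_mul_mul_comm, sqrt_mul_sqrt_self a, sqrt_mul_sqrt_self b, mul_assoc,
    ← h.cfcSqrt_left.eq, ← mul_assoc, sqrt_mul_sqrt_self a]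

end CommuteSqrt

open scoped MatrixOrder

theorem Matrix.PosSemidef.sqrt_eq_cfcSqrt {n : Type*} [Fintype n] [DecidableEq n]
    {A : Matrix n n ℝ} (hA : A.PosSemidef) : hA.sqrt = CFC.sqrt A := by
  rw [CFC.sqrt_eq_real_sqrt A hA.nonneg, cfcₙ_eq_cfc, hA.1.cfc_eq]
  simp [sqrt, Matrix.IsHermitian.cfc, Unitary.conjStarAlgAut_apply]

/-- If `S1` and `S2` are commuting positive semidefinite matrices, then
`tr(S1 + S2 - 2 (S1^{1/2} S2 S1^{1/2})^{1/2}) = ‖S1^{1/2} - S2^{1/2}‖_F²`. -/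
theorem commuting_psd_trace_eq_frobenius_sq {d : ℕ}
    {S1 S2 : Matrix (Fin d) (Fin d) ℝ}
    (h1 : S1.PosSemidef) (h2 : S2.PosSemidef)
    (hcomm : S1 * S2 = S2 * S1)
    (h12 : (h1.sqrt * S2 * h1.sqrt).PosSemidef) :
    (S1 + S2 - (2 : ℝ) • h12.sqrt).trace
      = ((h1.sqrt - h2.sqrt).transpose * (h1.sqrt - h2.sqrt)).trace := by
  simp only [Matrix.PosSemidef.sqrt_eq_cfcSqrt]
  rw [Commute.sqrt_sqrt_mul_mul_sqrt h1.nonneg h2.nonneg hcomm]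
  have hsymm : (CFC.sqrt S1 - CFC.sqrt S2).transpose = CFC.sqrt S1 - CFC.sqrt S2 := by
    rw [← Matrix.conjTranspose_eq_transpose_of_trivial]
    exact (CFC.sqrt_nonneg S1).isSelfAdjoint.sub (CFC.sqrt_nonneg S2).isSelfAdjoint
  rw [hsymm, ← sq, (Commute.cfcSqrt hcomm).sub_sq, CFC.sq_sqrt S1 h1.nonneg,
    CFC.sq_sqrt S2 h2.nonneg, two_smul, mul_assoc, two_mul]
  abel_nf
end

section
/- Let p(·|μ,σ) be a location-scale family on ℝ^d generated by a probability measure f with mean zero and identity covariance: p(·|μ,σ) is the pushforward of f under z ↦ σz + μ with σ > 0. Then W₂(p(·|μ₁,σ₁), p(·|μ₂,σ₂))² = ‖μ₁ − μ₂‖² + d(σ₁ − σ₂)². -/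
open MeasureTheory ProbabilityTheory

/-- Squared L² Wasserstein distance on probability measures on ℝ^d (as `Fin d → ℝ`),
defined as the infimum over couplings of the expected squared Euclidean distance. -/
noncomputable def W2sq {d : ℕ} (p q : Measure (Fin d → ℝ)) : ℝ :=
  sInf {r : ℝ | ∃ μ : Measure ((Fin d → ℝ) × (Fin d → ℝ)),
    IsProbabilityMeasure μ ∧ μ.map Prod.fst = p ∧ μ.map Prod.snd = q ∧
    r = ∫ z, ∑ i, (z.1 i - z.2 i) ^ 2 ∂μ}

/-- L² Wasserstein distance. -/
noncomputable def W2 {d : ℕ} (p q : Measure (Fin d → ℝ)) : ℝ := Real.sqrt (W2sq p q)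


/-- Location-scale family generated by `f`: pushforward of `f` under `z ↦ σ z + μ`. -/
noncomputable def locScaleFam {d : ℕ} (f : Measure (Fin d → ℝ)) (μ : Fin d → ℝ) (σ : ℝ) :
    Measure (Fin d → ℝ) := f.map (fun z => σ • z + μ)


set_option linter.unusedSectionVars false
set_option maxHeartbeats 1000000

section aux
variable {d : ℕ} (f : Measure (Fin d → ℝ)) [IsProbabilityMeasure f]

lemma W2aux_sq_int (hf2 : Integrable (fun z => ∑ i, z i ^ 2) f) (i : Fin d) :
    Integrable (fun z => z i ^ 2) f := by
  refine hf2.mono ((measurable_pi_apply i).pow_const 2).aestronglyMeasurable ?_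
  filter_upwards with z
  have h1 : z i ^ 2 ≤ ∑ j, z j ^ 2 :=
    Finset.single_le_sum (f := fun j => z j ^ 2) (fun j _ => sq_nonneg _) (Finset.mem_univ i)
  have h2 : (0:ℝ) ≤ ∑ j, z j ^ 2 := Finset.sum_nonneg fun j _ => sq_nonneg _
  simp only [Real.norm_eq_abs, abs_of_nonneg (sq_nonneg (z i)), abs_of_nonneg h2]
  exact h1

lemma W2aux_lin_int (hf2 : Integrable (fun z => ∑ i, z i ^ 2) f) (i : Fin d) :
    Integrable (fun z => z i) f := by
  refine ((integrable_const (1:ℝ)).add (W2aux_sq_int f hf2 i)).mono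
    (measurable_pi_apply i).aestronglyMeasurable ?_
  filter_upwards with z
  have : |z i| ≤ 1 + z i ^ 2 := by nlinarith [sq_nonneg (|z i| - 1), abs_nonneg (z i), sq_abs (z i)]
  have h2 : (0:ℝ) ≤ 1 + z i ^2 := by positivity
  simpa [Real.norm_eq_abs, abs_of_nonneg h2] using this

lemma W2aux_affine_sq_coord_int (hf2 : Integrable (fun z => ∑ i, z i ^ 2) f) (c : ℝ)
    (v : Fin d → ℝ) (i : Fin d) : Integrable (fun z => (c * z i + v i) ^ 2) f := by
  have heq : (fun z : Fin d → ℝ => (c * z i + v i) ^ 2)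
      = fun z => c^2 * z i ^2 + (2*c*v i * z i + v i ^2) := by funext z; ring
  rw [heq]
  exact ((W2aux_sq_int f hf2 i).const_mul _).add (((W2aux_lin_int f hf2 i).const_mul _).add
    (integrable_const _))

lemma W2aux_affine_sq_int (hf2 : Integrable (fun z => ∑ i, z i ^ 2) f) (c : ℝ) (v : Fin d → ℝ) :
    Integrable (fun z => ∑ i, (c * z i + v i) ^ 2) f :=
  integrable_finset_sum _ fun i _ => W2aux_affine_sq_coord_int f hf2 c v i

lemma W2aux_affine_sq_eval (hf2 : Integrable (fun z => ∑ i, z i ^ 2) f)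
    (hf0 : ∀ i, (∫ z, z i ∂f) = 0)
    (hfI : ∀ i j, (∫ z, z i * z j ∂f) = if i = j then (1 : ℝ) else 0)
    (c : ℝ) (v : Fin d → ℝ) :
    ∫ z, ∑ i, (c * z i + v i) ^ 2 ∂f = d * c ^ 2 + ∑ i, v i ^ 2 := by
  have hsq : ∀ i : Fin d, (∫ z, z i ^ 2 ∂f) = 1 := by
    intro i; have := hfI i i; simpa [pow_two] using this
  have key : ∀ i : Fin d, ∫ z, (c * z i + v i) ^ 2 ∂f = c^2 + v i ^2 := by
    intro i
    have heq : (fun z : Fin d → ℝ => (c * z i + v i) ^ 2)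
        = fun z => c^2 * z i ^2 + (2*c*v i * z i + v i ^2) := by funext z; ring
    have hA : Integrable (fun z : Fin d → ℝ => c^2 * z i ^ 2) f :=
      (W2aux_sq_int f hf2 i).const_mul _
    have hB : Integrable (fun z : Fin d → ℝ => 2*c*v i * z i + v i ^2) f :=
      ((W2aux_lin_int f hf2 i).const_mul _).add (integrable_const _)
    have hC : Integrable (fun z : Fin d → ℝ => 2*c*v i * z i) f :=
      (W2aux_lin_int f hf2 i).const_mul _
    rw [heq, integral_add hA hB, integral_add hC (integrable_const _),
      integral_const_mul, integral_const_mul, hsq i, hf0 i]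
    simp
  rw [integral_finset_sum _ (fun i _ => W2aux_affine_sq_coord_int f hf2 c v i)]
  simp only [key, Finset.sum_add_distrib, Finset.sum_const, Finset.card_univ, Fintype.card_fin,
    nsmul_eq_mul]

lemma W2aux_lin_sum_int (hf2 : Integrable (fun z => ∑ i, z i ^ 2) f) (v : Fin d → ℝ) :
    Integrable (fun z => ∑ i, v i * z i) f :=
  integrable_finset_sum _ fun i _ => (W2aux_lin_int f hf2 i).const_mul _

lemma W2aux_lin_sum_eval (hf2 : Integrable (fun z => ∑ i, z i ^ 2) f)
    (hf0 : ∀ i, (∫ z, z i ∂f) = 0) (v : Fin d → ℝ) :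
    ∫ z, ∑ i, v i * z i ∂f = 0 := by
  rw [integral_finset_sum _ fun i _ => (W2aux_lin_int f hf2 i).const_mul _]
  simp [integral_const_mul, hf0]

lemma W2aux_transfer (π : Measure ((Fin d → ℝ) × (Fin d → ℝ)))
    (proj : (Fin d → ℝ) × (Fin d → ℝ) → (Fin d → ℝ)) (hproj : Measurable proj)
    (μ : Fin d → ℝ) (σ : ℝ) (h : π.map proj = locScaleFam f μ σ)
    (g : (Fin d → ℝ) → ℝ) (hg : Measurable g)
    (hInt : Integrable (fun z => g (σ • z + μ)) f) :
    Integrable (fun w => g (proj w)) π ∧ ∫ w, g (proj w) ∂π = ∫ z, g (σ • z + μ) ∂f := by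
  have hφ : Measurable (fun z : Fin d → ℝ => σ • z + μ) := by fun_prop
  have h1 : Integrable g (π.map proj) := by
    rw [h, locScaleFam, integrable_map_measure hg.aestronglyMeasurable hφ.aemeasurable]
    exact hInt
  constructor
  · exact (integrable_map_measure hg.aestronglyMeasurable hproj.aemeasurable).mp h1
  · rw [← integral_map hproj.aemeasurable hg.aestronglyMeasurable, h, locScaleFam,
      integral_map hφ.aemeasurable hg.aestronglyMeasurable]

end aux

/-- For a location-scale family generated by a mean-zero, identity-covariance measure,
`W₂(p(·|μ₁,σ₁), p(·|μ₂,σ₂))² = ‖μ₁-μ₂‖² + d (σ₁-σ₂)²`. -/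
theorem W2sq_locScale {d : ℕ} (f : Measure (Fin d → ℝ)) [IsProbabilityMeasure f]
    (hf2 : Integrable (fun z => ∑ i, z i ^ 2) f)
    (hf0 : ∀ i, (∫ z, z i ∂f) = 0)
    (hfI : ∀ i j, (∫ z, z i * z j ∂f) = if i = j then (1 : ℝ) else 0)
    (μ₁ μ₂ : Fin d → ℝ) {σ₁ σ₂ : ℝ} (hσ₁ : 0 < σ₁) (hσ₂ : 0 < σ₂) :
    W2sq (locScaleFam f μ₁ σ₁) (locScaleFam f μ₂ σ₂)
      = (∑ i, (μ₁ i - μ₂ i) ^ 2) + d * (σ₁ - σ₂) ^ 2 := by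
  classical
  set C : ℝ := ∑ i, (μ₁ i - μ₂ i) ^ 2 with hC
  set target : ℝ := C + d * (σ₁ - σ₂) ^ 2 with htarget
  -- the candidate coupling
  have hT : Measurable (fun z : Fin d → ℝ => (σ₁ • z + μ₁, σ₂ • z + μ₂)) := by fun_prop
  have hgcost : Measurable (fun w : (Fin d → ℝ) × (Fin d → ℝ) => ∑ i, (w.1 i - w.2 i) ^ 2) := by
    apply Finset.measurable_sum
    intro i _
    exact (((measurable_pi_apply i).comp measurable_fst).sub
      ((measurable_pi_apply i).comp measurable_snd)).pow_const 2
  have hmem : target ∈ {r : ℝ | ∃ μ : Measure ((Fin d → ℝ) × (Fin d → ℝ)),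
      IsProbabilityMeasure μ ∧ μ.map Prod.fst = locScaleFam f μ₁ σ₁ ∧
      μ.map Prod.snd = locScaleFam f μ₂ σ₂ ∧
      r = ∫ z, ∑ i, (z.1 i - z.2 i) ^ 2 ∂μ} := by
    refine ⟨f.map (fun z => (σ₁ • z + μ₁, σ₂ • z + μ₂)), ?_, ?_, ?_, ?_⟩
    · exact Measure.isProbabilityMeasure_map hT.aemeasurable
    · rw [Measure.map_map measurable_fst hT]; rfl
    · rw [Measure.map_map measurable_snd hT]; rfl
    · rw [integral_map hT.aemeasurable hgcost.aestronglyMeasurable]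
      have heq : (fun z : Fin d → ℝ =>
          ∑ i, ((σ₁ • z + μ₁) i - (σ₂ • z + μ₂) i) ^ 2)
          = fun z => ∑ i, ((σ₁ - σ₂) * z i + (μ₁ i - μ₂ i)) ^ 2 := by
        funext z
        refine Finset.sum_congr rfl fun i _ => ?_
        simp only [Pi.add_apply, Pi.smul_apply, smul_eq_mul]
        ring
      rw [heq, W2aux_affine_sq_eval f hf2 hf0 hfI (σ₁ - σ₂) (fun i => μ₁ i - μ₂ i)]
      rw [htarget, hC]; ring
  have hlb : ∀ r ∈ {r : ℝ | ∃ μ : Measure ((Fin d → ℝ) × (Fin d → ℝ)),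
      IsProbabilityMeasure μ ∧ μ.map Prod.fst = locScaleFam f μ₁ σ₁ ∧
      μ.map Prod.snd = locScaleFam f μ₂ σ₂ ∧
      r = ∫ z, ∑ i, (z.1 i - z.2 i) ^ 2 ∂μ}, target ≤ r := by
    rintro r ⟨π, hπ, h1, h2, hr⟩
    -- functions
    set fA : (Fin d → ℝ) × (Fin d → ℝ) → ℝ := fun w => ∑ i, (w.1 i - μ₁ i) ^ 2 with hfA
    set fB : (Fin d → ℝ) × (Fin d → ℝ) → ℝ := fun w => ∑ i, (w.2 i - μ₂ i) ^ 2 with hfB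
    set gA : (Fin d → ℝ) × (Fin d → ℝ) → ℝ := fun w => ∑ i, (μ₁ i - μ₂ i) * (w.1 i - μ₁ i)
      with hgA
    set gB : (Fin d → ℝ) × (Fin d → ℝ) → ℝ := fun w => ∑ i, (μ₁ i - μ₂ i) * (w.2 i - μ₂ i)
      with hgB
    set k : (Fin d → ℝ) × (Fin d → ℝ) → ℝ := fun w => ∑ i, (w.1 i - μ₁ i) * (w.2 i - μ₂ i)
      with hk
    -- transfer for fA
    have hgsq₁ : Measurable (fun x : Fin d → ℝ => ∑ i, (x i - μ₁ i) ^ 2) := by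
      apply Finset.measurable_sum
      intro i _
      exact ((measurable_pi_apply i).sub measurable_const).pow_const 2
    have hgsq₂ : Measurable (fun x : Fin d → ℝ => ∑ i, (x i - μ₂ i) ^ 2) := by
      apply Finset.measurable_sum
      intro i _
      exact ((measurable_pi_apply i).sub measurable_const).pow_const 2
    have hcomp₁ : (fun z : Fin d → ℝ => ∑ i, ((σ₁ • z + μ₁) i - μ₁ i) ^ 2)
        = fun z => ∑ i, (σ₁ * z i + (0:Fin d → ℝ) i) ^ 2 := by
      funext z
      refine Finset.sum_congr rfl fun i _ => ?_
      simp only [Pi.add_apply, Pi.smul_apply, smul_eq_mul, Pi.zero_apply]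
      ring
    have hcomp₂ : (fun z : Fin d → ℝ => ∑ i, ((σ₂ • z + μ₂) i - μ₂ i) ^ 2)
        = fun z => ∑ i, (σ₂ * z i + (0:Fin d → ℝ) i) ^ 2 := by
      funext z
      refine Finset.sum_congr rfl fun i _ => ?_
      simp only [Pi.add_apply, Pi.smul_apply, smul_eq_mul, Pi.zero_apply]
      ring
    have hA := W2aux_transfer f π Prod.fst measurable_fst μ₁ σ₁ h1 _ hgsq₁
      (by rw [hcomp₁]; exact W2aux_affine_sq_int f hf2 σ₁ 0)
    have hB := W2aux_transfer f π Prod.snd measurable_snd μ₂ σ₂ h2 _ hgsq₂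
      (by rw [hcomp₂]; exact W2aux_affine_sq_int f hf2 σ₂ 0)
    have hIA : Integrable fA π := hA.1
    have hIB : Integrable fB π := hB.1
    have hvA : ∫ w, fA w ∂π = d * σ₁ ^ 2 := by
      rw [hfA]
      rw [hA.2, hcomp₁, W2aux_affine_sq_eval f hf2 hf0 hfI σ₁ 0]
      simp
    have hvB : ∫ w, fB w ∂π = d * σ₂ ^ 2 := by
      rw [hfB]
      rw [hB.2, hcomp₂, W2aux_affine_sq_eval f hf2 hf0 hfI σ₂ 0]
      simp
    -- transfer for gA, gB
    have hglin₁ : Measurable (fun x : Fin d → ℝ => ∑ i, (μ₁ i - μ₂ i) * (x i - μ₁ i)) := by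
      apply Finset.measurable_sum
      intro i _
      exact ((measurable_pi_apply i).sub measurable_const).const_mul _
    have hglin₂ : Measurable (fun x : Fin d → ℝ => ∑ i, (μ₁ i - μ₂ i) * (x i - μ₂ i)) := by
      apply Finset.measurable_sum
      intro i _
      exact ((measurable_pi_apply i).sub measurable_const).const_mul _
    have hcompl₁ : (fun z : Fin d → ℝ => ∑ i, (μ₁ i - μ₂ i) * ((σ₁ • z + μ₁) i - μ₁ i))
        = fun z => ∑ i, ((μ₁ i - μ₂ i) * σ₁) * z i := by
      funext z
      refine Finset.sum_congr rfl fun i _ => ?_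
      simp only [Pi.add_apply, Pi.smul_apply, smul_eq_mul]
      ring
    have hcompl₂ : (fun z : Fin d → ℝ => ∑ i, (μ₁ i - μ₂ i) * ((σ₂ • z + μ₂) i - μ₂ i))
        = fun z => ∑ i, ((μ₁ i - μ₂ i) * σ₂) * z i := by
      funext z
      refine Finset.sum_congr rfl fun i _ => ?_
      simp only [Pi.add_apply, Pi.smul_apply, smul_eq_mul]
      ring
    have hGA := W2aux_transfer f π Prod.fst measurable_fst μ₁ σ₁ h1 _ hglin₁
      (by rw [hcompl₁]; exact W2aux_lin_sum_int f hf2 _)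
    have hGB := W2aux_transfer f π Prod.snd measurable_snd μ₂ σ₂ h2 _ hglin₂
      (by rw [hcompl₂]; exact W2aux_lin_sum_int f hf2 _)
    have hIgA : Integrable gA π := hGA.1
    have hIgB : Integrable gB π := hGB.1
    have hvgA : ∫ w, gA w ∂π = 0 := by
      rw [hgA, hGA.2, hcompl₁, W2aux_lin_sum_eval f hf2 hf0 _]
    have hvgB : ∫ w, gB w ∂π = 0 := by
      rw [hgB, hGB.2, hcompl₂, W2aux_lin_sum_eval f hf2 hf0 _]
    -- integrability of k
    have hkm : Measurable k := by
      rw [hk]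
      apply Finset.measurable_sum
      intro i _
      exact (((measurable_pi_apply i).comp measurable_fst).sub measurable_const).mul
        (((measurable_pi_apply i).comp measurable_snd).sub measurable_const)
    have hIk : Integrable k π := by
      refine (hIA.add hIB).mono hkm.aestronglyMeasurable ?_
      filter_upwards with w
      have h1' : |k w| ≤ ∑ i, |(w.1 i - μ₁ i) * (w.2 i - μ₂ i)| := by
        rw [hk]; exact Finset.abs_sum_le_sum_abs _ _
      have h2' : ∑ i, |(w.1 i - μ₁ i) * (w.2 i - μ₂ i)| ≤ fA w + fB w := by
        rw [hfA, hfB, ← Finset.sum_add_distrib]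
        refine Finset.sum_le_sum fun i _ => ?_
        rw [abs_mul]
        nlinarith [sq_nonneg (|w.1 i - μ₁ i| - |w.2 i - μ₂ i|), abs_nonneg (w.1 i - μ₁ i),
          abs_nonneg (w.2 i - μ₂ i), sq_abs (w.1 i - μ₁ i), sq_abs (w.2 i - μ₂ i)]
      have h3' : (0:ℝ) ≤ fA w + fB w := by
        have : (0:ℝ) ≤ fA w := Finset.sum_nonneg fun i _ => sq_nonneg _
        have : (0:ℝ) ≤ fB w := Finset.sum_nonneg fun i _ => sq_nonneg _
        positivity
      calc ‖k w‖ = |k w| := rfl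
        _ ≤ fA w + fB w := le_trans h1' h2'
        _ ≤ ‖fA w + fB w‖ := le_abs_self _
    set S : ℝ := ∫ w, k w ∂π with hS
    -- Cauchy-Schwarz via positivity
    have hCS : S ≤ d * (σ₁ * σ₂) := by
      have hpos : 0 ≤ ∫ w, ∑ i, (σ₂ * (w.1 i - μ₁ i) - σ₁ * (w.2 i - μ₂ i)) ^ 2 ∂π :=
        integral_nonneg fun w => Finset.sum_nonneg fun i _ => sq_nonneg _
      have hexp : (fun w : (Fin d → ℝ) × (Fin d → ℝ) =>
          ∑ i, (σ₂ * (w.1 i - μ₁ i) - σ₁ * (w.2 i - μ₂ i)) ^ 2)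
          = fun w => σ₂^2 * fA w + σ₁^2 * fB w - 2 * (σ₁ * σ₂) * k w := by
        funext w
        rw [hfA, hfB, hk]
        simp only [Finset.mul_sum, ← Finset.sum_add_distrib, ← Finset.sum_sub_distrib]
        refine Finset.sum_congr rfl fun i _ => by ring
      rw [hexp] at hpos
      have j1 : Integrable (fun w => σ₂^2 * fA w + σ₁^2 * fB w) π :=
        (hIA.const_mul _).add (hIB.const_mul _)
      have j2 : Integrable (fun w => 2 * (σ₁ * σ₂) * k w) π := hIk.const_mul _
      rw [integral_sub j1 j2,
        integral_add (hIA.const_mul _) (hIB.const_mul _), integral_const_mul, integral_const_mul,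
        integral_const_mul, hvA, hvB, ← hS] at hpos
      nlinarith [hσ₁.le, hσ₂.le, mul_pos hσ₁ hσ₂]
    -- expand the cost
    have hpt : (fun w : (Fin d → ℝ) × (Fin d → ℝ) => ∑ i, (w.1 i - w.2 i) ^ 2)
        = fun w => fA w + fB w - 2 * k w + 2 * gA w - 2 * gB w + C := by
      funext w
      rw [hfA, hfB, hk, hgA, hgB, hC]
      simp only [Finset.mul_sum, ← Finset.sum_add_distrib, ← Finset.sum_sub_distrib]
      refine Finset.sum_congr rfl fun i _ => by ring
    have hrval : r = d * σ₁ ^ 2 + d * σ₂ ^ 2 - 2 * S + C := by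
      rw [hr, hpt]
      have i1 : Integrable (fun w => fA w + fB w) π := hIA.add hIB
      have i2 : Integrable (fun w => fA w + fB w - 2 * k w) π := i1.sub (hIk.const_mul 2)
      have i3 : Integrable (fun w => fA w + fB w - 2 * k w + 2 * gA w) π :=
        i2.add (hIgA.const_mul 2)
      have i4 : Integrable (fun w => fA w + fB w - 2 * k w + 2 * gA w - 2 * gB w) π :=
        i3.sub (hIgB.const_mul 2)
      rw [integral_add i4 (integrable_const _),
        integral_sub i3 (hIgB.const_mul 2),
        integral_add i2 (hIgA.const_mul 2),
        integral_sub i1 (hIk.const_mul 2),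
        integral_add hIA hIB, integral_const_mul, integral_const_mul, integral_const_mul,
        hvA, hvB, hvgA, hvgB, ← hS, integral_const]
      simp [measure_univ]
    rw [hrval, htarget]
    nlinarith [hCS, mul_pos hσ₁ hσ₂]
  unfold W2sq
  exact le_antisymm (csInf_le ⟨target, hlb⟩ hmem) (le_csInf ⟨target, hmem⟩ hlb)
end

section
/- Let the joint density of (τ, x, s) be proportional to g(τ,x,s) = τ^{(n+d)/2} ∫₀¹ λ^{d/2−1} exp(−τ(‖x‖²λ + s)/2) dλ for τ > 0, x ∈ ℝ^d, s > 0. Then the posterior mean of σ = τ^{−1/2} given (x,s) equals φ₀(w)√s, where w = ‖x‖²/s and φ₀(w) = (1/√2)·(Γ((n+d+1)/2)/Γ((n+d+2)/2))·(∫₀¹ λ^{d/2−1}(1+λw)^{−(n+d+1)/2} dλ)/(∫₀¹ λ^{d/2−1}(1+λw)^{−(n+d+2)/2} dλ). -/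
/-!
Both integrals are Gamma mixtures. Exchanging the `τ`- and `λ`-integrals (Fubini) and using
`∫₀^∞ τ^(a-1) e^(-cτ) dτ = Γ(a) c^(-a)` with `c = (‖x‖²λ + s)/2 = (s/2)(1 + λw)` gives
`∫₀^∞ τ^(a-1-(n+d)/2) g(τ) dτ = Γ(a) (2/s)^a ∫₀¹ λ^(d/2-1) (1 + λw)^(-a) dλ`.
The numerator is the case `a = (n+d+1)/2` and the denominator the case `a = (n+d+2)/2`; the
two factors `(2/s)^a` differ by `√(2/s)`.
-/

open MeasureTheory Set Real

theorem integral_rpow_mul_integral_exp_neg_mul {α : Type*} [MeasurableSpace α] {μ : Measure α}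
    [SFinite μ] {f c : α → ℝ} {c₀ a : ℝ} (hf : Integrable f μ) (hc : Measurable c)
    (hc₀ : 0 < c₀) (hc₀c : ∀ᵐ l ∂μ, c₀ ≤ c l) (ha : 0 < a) :
    ∫ τ in Ioi 0, τ ^ (a - 1) * ∫ l, f l * exp (-(c l * τ)) ∂μ
      = Gamma a * ∫ l, f l * (1 / c l) ^ a ∂μ := by
  have hgamma : IntegrableOn (fun τ : ℝ => τ ^ (a - 1) * exp (-c₀ * τ)) (Ioi 0) := by
    simpa using integrableOn_rpow_mul_exp_neg_mul_rpow (p := 1) (by linarith) one_pos hc₀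
  have hint : Integrable (Function.uncurry fun τ l => τ ^ (a - 1) * (f l * exp (-(c l * τ))))
      ((volume.restrict (Ioi 0)).prod μ) := by
    refine (hgamma.mul_prod hf.norm).mono' ?_ ?_
    · exact (measurable_fst.pow_const _).aestronglyMeasurable.mul (hf.1.comp_snd.mul
        ((hc.comp measurable_snd).mul measurable_fst).neg.exp.aestronglyMeasurable)
    · filter_upwards [Measure.quasiMeasurePreserving_fst.ae (ae_restrict_mem measurableSet_Ioi),
        Measure.quasiMeasurePreserving_snd.ae hc₀c] with ⟨τ, l⟩ (hτ : 0 < τ) (hl : c₀ ≤ c l)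
      have hexp : exp (-(c l * τ)) ≤ exp (-c₀ * τ) := by
        gcongr; nlinarith
      simp only [Function.uncurry_apply_pair, norm_mul, Real.norm_eq_abs,
        abs_of_pos (exp_pos _), abs_of_nonneg (rpow_nonneg hτ.le _)]
      calc τ ^ (a - 1) * (|f l| * exp (-(c l * τ)))
          ≤ τ ^ (a - 1) * (|f l| * exp (-c₀ * τ)) := by gcongr
        _ = τ ^ (a - 1) * exp (-c₀ * τ) * |f l| := by ring
  simp_rw [← integral_const_mul]
  rw [integral_integral_swap hint]
  refine integral_congr_ae ?_
  filter_upwards [hc₀c] with l hl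
  simp_rw [mul_left_comm _ (f l)]
  rw [integral_const_mul, integral_rpow_mul_exp_neg_mul_Ioi ha (hc₀.trans_le hl)]
  ring

theorem one_div_half_mul_add_rpow {S s l a : ℝ} (hs : 0 < s) (hSl : 0 ≤ S * l) :
    (1 / ((S * l + s) / 2)) ^ a = (2 / s) ^ a * (1 + l * (S / s)) ^ (-a) := by
  have hpos : 0 < 1 + l * (S / s) := by
    have : 0 ≤ l * (S / s) := by rw [mul_div_assoc', mul_comm l]; positivity
    linarith
  have hbase : 1 / ((S * l + s) / 2) = 2 / s * (1 + l * (S / s))⁻¹ := by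
    field_simp
    ring
  rw [hbase, mul_rpow (by positivity) (by positivity), inv_rpow hpos.le, ← rpow_neg hpos.le]

theorem integral_rpow_mul_integral_Ioo_exp {b S s a : ℝ} (hb : -1 < b) (hS : 0 ≤ S)
    (hs : 0 < s) (ha : 0 < a) :
    ∫ τ in Ioi 0, τ ^ (a - 1) * ∫ l in Ioo 0 1, l ^ b * exp (-τ * (S * l + s) / 2)
      = Gamma a * (2 / s) ^ a * ∫ l in Ioo 0 1, l ^ b * (1 + l * (S / s)) ^ (-a) := by
  have hexp : ∀ τ l : ℝ, -τ * (S * l + s) / 2 = -((S * l + s) / 2 * τ) := fun _ _ => by ring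
  simp_rw [hexp]
  rw [integral_rpow_mul_integral_exp_neg_mul
    ((intervalIntegral.integrableOn_Ioo_rpow_iff one_pos).2 hb) (by fun_prop) (half_pos hs) ?_ ha,
    mul_assoc, ← integral_const_mul ((2 / s) ^ a)]
  · congr 1
    refine setIntegral_congr_fun measurableSet_Ioo fun l hl => ?_
    rw [one_div_half_mul_add_rpow hs (mul_nonneg hS hl.1.le)]
    ring
  · filter_upwards [ae_restrict_mem measurableSet_Ioo] with l hl
    have := mul_nonneg hS hl.1.le
    linarith

theorem integrableOn_Ioo_rpow_mul_one_add_mul_rpow {b w a : ℝ} (hb : -1 < b) (hw : 0 ≤ w) :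
    IntegrableOn (fun l => l ^ b * (1 + l * w) ^ a) (Ioo 0 1) :=
  ((intervalIntegral.integrableOn_Ioo_rpow_iff one_pos).2 hb).mul_continuousOn_of_subset
    (fun l hl => ((continuous_const.add (continuous_id.mul continuous_const)).continuousAt.rpow_const
      (Or.inl (by nlinarith [hl.1] : 1 + l * w ≠ 0))).continuousWithinAt)
    measurableSet_Ioo isCompact_Icc Ioo_subset_Icc_self

theorem setIntegral_Ioo_rpow_mul_one_add_mul_rpow_pos {b w a : ℝ} (hb : -1 < b) (hw : 0 ≤ w) :
    0 < ∫ l in Ioo 0 1, l ^ b * (1 + l * w) ^ a := by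
  have hpos : ∀ l ∈ Ioo (0 : ℝ) 1, 0 < l ^ b * (1 + l * w) ^ a := fun l hl => by
    have hl0 : 0 < l := hl.1
    have : 0 < 1 + l * w := by nlinarith
    positivity
  rw [setIntegral_pos_iff_support_of_nonneg_ae
    ((ae_restrict_mem measurableSet_Ioo).mono fun l hl => (hpos l hl).le)
    (integrableOn_Ioo_rpow_mul_one_add_mul_rpow hb hw)]
  exact lt_of_lt_of_le (by simp) (measure_mono fun l hl => ⟨(hpos l hl).ne', hl⟩)

theorem posterior_mean_of_sigma_general (n d : ℕ) (hd : 0 < d)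
    (x : Fin d → ℝ) (s : ℝ) (hs : 0 < s)
    (w : ℝ) (hw : w = (∑ i, x i ^ 2) / s)
    (g : ℝ → ℝ)
    (hg : ∀ τ : ℝ, g τ = τ ^ (((n : ℝ) + d) / 2) *
      ∫ l in Set.Ioo (0 : ℝ) 1,
        l ^ ((d : ℝ) / 2 - 1) * Real.exp (-τ * ((∑ i, x i ^ 2) * l + s) / 2)) :
    (∫ τ in Set.Ioi (0 : ℝ), τ ^ (-(1 : ℝ) / 2) * g τ) / (∫ τ in Set.Ioi (0 : ℝ), g τ)
      = (1 / Real.sqrt 2)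
        * (Real.Gamma (((n : ℝ) + d + 1) / 2) / Real.Gamma (((n : ℝ) + d + 2) / 2))
        * ((∫ l in Set.Ioo (0 : ℝ) 1,
              l ^ ((d : ℝ) / 2 - 1) * (1 + l * w) ^ (-((n : ℝ) + d + 1) / 2))
          / (∫ l in Set.Ioo (0 : ℝ) 1,
              l ^ ((d : ℝ) / 2 - 1) * (1 + l * w) ^ (-((n : ℝ) + d + 2) / 2)))
        * Real.sqrt s := by
  have hS : 0 ≤ ∑ i, x i ^ 2 := by positivity
  have hb : (-1 : ℝ) < d / 2 - 1 := by
    have : (0 : ℝ) < d := Nat.cast_pos.2 hd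
    linarith
  have hnum : ∫ τ in Ioi 0, τ ^ (-(1 : ℝ) / 2) * g τ = Gamma ((n + d + 1) / 2)
      * (2 / s) ^ (((n : ℝ) + d + 1) / 2)
      * ∫ l in Ioo 0 1, l ^ ((d : ℝ) / 2 - 1) * (1 + l * w) ^ (-((n : ℝ) + d + 1) / 2) := by
    rw [hw, neg_div (2 : ℝ) ((n : ℝ) + d + 1),
      ← integral_rpow_mul_integral_Ioo_exp hb hS hs (by positivity)]
    refine setIntegral_congr_fun measurableSet_Ioi fun τ (hτ : 0 < τ) => ?_
    rw [hg, ← mul_assoc, ← rpow_add hτ]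
    congr 2
    ring
  have hden : ∫ τ in Ioi 0, g τ = Gamma ((n + d + 2) / 2)
      * (2 / s) ^ (((n : ℝ) + d + 2) / 2)
      * ∫ l in Ioo 0 1, l ^ ((d : ℝ) / 2 - 1) * (1 + l * w) ^ (-((n : ℝ) + d + 2) / 2) := by
    rw [hw, neg_div (2 : ℝ) ((n : ℝ) + d + 2),
      ← integral_rpow_mul_integral_Ioo_exp hb hS hs (by positivity)]
    refine setIntegral_congr_fun measurableSet_Ioi fun τ _ => ?_
    rw [hg]
    congr 2
    ring
  have hscale : (2 / s) ^ (((n : ℝ) + d + 2) / 2)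
      = (2 / s) ^ (((n : ℝ) + d + 1) / 2) * (√2 / √s) := by
    rw [← sqrt_div zero_le_two, sqrt_eq_rpow, ← rpow_add (by positivity)]
    congr 1
    ring
  have hJ := setIntegral_Ioo_rpow_mul_one_add_mul_rpow_pos hb (hw ▸ by positivity : 0 ≤ w)
    (a := -((n : ℝ) + d + 2) / 2)
  have hΓ := Gamma_pos_of_pos (by positivity : (0 : ℝ) < (n + d + 2) / 2)
  rw [hnum, hden, hscale]
  -- abstracted so that `field_simp` does not rewrite inside the integrands
  set J₁ := ∫ l in Ioo 0 1, l ^ ((d : ℝ) / 2 - 1) * (1 + l * w) ^ (-((n : ℝ) + d + 1) / 2)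
  set J₂ := ∫ l in Ioo 0 1, l ^ ((d : ℝ) / 2 - 1) * (1 + l * w) ^ (-((n : ℝ) + d + 2) / 2)
  field_simp

/-- With joint density proportional to
`g(τ,x,s) = τ^{(n+d)/2} ∫₀¹ λ^{d/2-1} exp(-τ(‖x‖²λ+s)/2) dλ`, the posterior mean of
`σ = τ^{-1/2}` given `(x,s)` equals `φ₀(w)√s` where `w = ‖x‖²/s`. -/
theorem posterior_mean_of_sigma (n d : ℕ) (hn : 0 < n) (hd : 0 < d)
    (x : Fin d → ℝ) (s : ℝ) (hs : 0 < s)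
    (w : ℝ) (hw : w = (∑ i, x i ^ 2) / s)
    (g : ℝ → ℝ)
    (hg : ∀ τ : ℝ, g τ = τ ^ (((n : ℝ) + d) / 2) *
      ∫ l in Set.Ioo (0 : ℝ) 1,
        l ^ ((d : ℝ) / 2 - 1) * Real.exp (-τ * ((∑ i, x i ^ 2) * l + s) / 2)) :
    (∫ τ in Set.Ioi (0 : ℝ), τ ^ (-(1 : ℝ) / 2) * g τ) / (∫ τ in Set.Ioi (0 : ℝ), g τ)
      = (1 / Real.sqrt 2)
        * (Real.Gamma (((n : ℝ) + d + 1) / 2) / Real.Gamma (((n : ℝ) + d + 2) / 2))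
        * ((∫ l in Set.Ioo (0 : ℝ) 1,
              l ^ ((d : ℝ) / 2 - 1) * (1 + l * w) ^ (-((n : ℝ) + d + 1) / 2))
          / (∫ l in Set.Ioo (0 : ℝ) 1,
              l ^ ((d : ℝ) / 2 - 1) * (1 + l * w) ^ (-((n : ℝ) + d + 2) / 2)))
        * Real.sqrt s :=
  posterior_mean_of_sigma_general n d hd x s hs w hw g hg
end
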